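/- arXiv:2107.03814 — 2 statements merged into one kernel-verified Lean document; each statement's English description precedes it below -/
import Mathlib

section
/- Let n ≥ 1 and let ξ be the (n+1)×(n+1) complex matrix with block form [[0, e₁],[eₙᵀ, 0]] (where e₁, eₙ are the first and last standard basis vectors of ℂⁿ, the top-left block is n×n zero, and the bottom-right entry is 0). Let 𝔥 = {block-diag(A, a) : A ∈ Mₙ(ℂ), a = −tr(A)} and 𝔪 = {[[0,u],[vᵀ,0]] : u, v ∈ ℂⁿ}. Then the linear map ad ξ : 𝔥 → 𝔪, χ ↦ [ξ, χ], has rank 2n − 1, i.e. corank 1 in 𝔪. -/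
open Matrix

/-- The matrix `ξ = [[0, e₁],[eₙᵀ, 0]]` in block form, with `n = m+1`. -/
noncomputable def xiMat (m : ℕ) : Matrix (Fin (m+1) ⊕ Unit) (Fin (m+1) ⊕ Unit) ℂ :=
  Matrix.fromBlocks 0
    (Matrix.of fun i (_ : Unit) => if i = (0 : Fin (m+1)) then (1:ℂ) else 0)
    (Matrix.of fun (_ : Unit) j => if j = Fin.last m then (1:ℂ) else 0)
    0

/-- The embedding of `A ∈ Mₙ(ℂ)` as `block-diag(A, −tr A)`, an element of 𝔥. -/
noncomputable def embH (m : ℕ) (A : Matrix (Fin (m+1)) (Fin (m+1)) ℂ) :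
    Matrix (Fin (m+1) ⊕ Unit) (Fin (m+1) ⊕ Unit) ℂ :=
  Matrix.fromBlocks A 0 0 (Matrix.of fun (_ : Unit) (_ : Unit) => -(Matrix.trace A))

noncomputable def uFun (m : ℕ) (A : Matrix (Fin (m+1)) (Fin (m+1)) ℂ) (k : Fin (m+1)) : ℂ :=
  (if k = 0 then 1 else 0) * (-(Matrix.trace A)) - A k 0

noncomputable def vFun (m : ℕ) (A : Matrix (Fin (m+1)) (Fin (m+1)) ℂ) (j : Fin (m+1)) : ℂ :=
  A (Fin.last m) j + (Matrix.trace A) * (if j = Fin.last m then 1 else 0)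

lemma comm_eq (m : ℕ) (A : Matrix (Fin (m+1)) (Fin (m+1)) ℂ) :
    xiMat m * embH m A - embH m A * xiMat m =
      Matrix.fromBlocks 0 (Matrix.of fun k (_ : Unit) => uFun m A k)
        (Matrix.of fun (_ : Unit) j => vFun m A j) 0 := by
  ext (i|i) (j|j) <;>
    simp [xiMat, embH, Matrix.mul_apply, Matrix.fromBlocks, Fintype.sum_sum_type,
      uFun, vFun, Finset.sum_ite_eq, Finset.sum_ite_eq', mul_comm, sub_eq_iff_eq_add]

section
variable (m : ℕ)

noncomputable def gen : (Fin m ⊕ Fin m ⊕ Unit) → Matrix (Fin (m+1) ⊕ Unit) (Fin (m+1) ⊕ Unit) ℂ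
  | Sum.inl i => Matrix.fromBlocks 0
      (Matrix.of fun k (_ : Unit) => if k = i.castSucc then (1:ℂ) else 0) 0 0
  | Sum.inr (Sum.inl j) => Matrix.fromBlocks 0 0
      (Matrix.of fun (_ : Unit) k => if k = j.succ then (1:ℂ) else 0) 0
  | Sum.inr (Sum.inr _) => Matrix.fromBlocks 0
      (Matrix.of fun k (_ : Unit) => if k = Fin.last m then (-1:ℂ) else 0)
      (Matrix.of fun (_ : Unit) k => if k = 0 then (1:ℂ) else 0) 0

lemma gen_indep : LinearIndependent ℂ (gen m) := by
  rw [Fintype.linearIndependent_iff]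
  intro g hg
  have h := fun p q => congrFun (congrFun hg p) q
  rintro (i | j | ⟨⟩)
  · have := h (Sum.inl i.castSucc) (Sum.inr ())
    simpa [Matrix.sum_apply, gen, Fintype.sum_sum_type,
      Matrix.fromBlocks_apply₁₂, (Fin.castSucc_lt_last i).ne,
      Finset.sum_ite_eq', (Fin.castSucc_injective m).eq_iff] using this
  · have := h (Sum.inr ()) (Sum.inl j.succ)
    simpa [Matrix.sum_apply, gen, Fintype.sum_sum_type, Matrix.fromBlocks_apply₂₁,
      Fin.succ_ne_zero j, Finset.sum_ite_eq', (Fin.succ_injective m).eq_iff] using this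
  · have := h (Sum.inr ()) (Sum.inl 0)
    simpa [Matrix.sum_apply, gen, Fintype.sum_sum_type, Matrix.fromBlocks_apply₂₁,
      fun x : Fin m => (Fin.succ_ne_zero x).symm, Finset.sum_ite_eq'] using this
end

lemma mem_span_gen (m : ℕ) (u v : Fin (m+1) → ℂ) (huv : v 0 = -(u (Fin.last m))) :
    (Matrix.fromBlocks 0 (Matrix.of fun k (_ : Unit) => u k)
      (Matrix.of fun (_ : Unit) j => v j) 0 :
      Matrix (Fin (m+1) ⊕ Unit) (Fin (m+1) ⊕ Unit) ℂ) =
    (∑ i : Fin m, u i.castSucc • gen m (Sum.inl i)) +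
      ((∑ j : Fin m, v j.succ • gen m (Sum.inr (Sum.inl j))) +
        v 0 • gen m (Sum.inr (Sum.inr ()))) := by
  ext (k | ⟨⟩) (l | ⟨⟩)
  · simp [gen, Matrix.sum_apply]
  · induction k using Fin.lastCases with
    | last =>
        simp [gen, Matrix.sum_apply, fun i : Fin m => ((Fin.castSucc_lt_last i).ne :
          (Fin.castSucc i) ≠ Fin.last m).symm, huv]
    | cast i =>
        simp [gen, Matrix.sum_apply, (Fin.castSucc_lt_last i).ne,
          Finset.sum_ite_eq', (Fin.castSucc_injective m).eq_iff]
  · induction l using Fin.cases with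
    | zero =>
        simp [gen, Matrix.sum_apply, fun x : Fin m => (Fin.succ_ne_zero x).symm]
    | succ j =>
        simp [gen, Matrix.sum_apply, Fin.succ_ne_zero j,
          Finset.sum_ite_eq', (Fin.succ_injective m).eq_iff]
  · simp [gen, Matrix.sum_apply]


lemma stdA {n : ℕ} (a b k l : Fin n) (c : ℂ) :
    Matrix.single a b c k l = if k = a ∧ l = b then c else 0 := by
  simp [Matrix.single, @eq_comm _ a, @eq_comm _ b]

lemma gen_mem (m : ℕ) (x : Fin m ⊕ Fin m ⊕ Unit) :
    ∃ A : Matrix (Fin (m+1)) (Fin (m+1)) ℂ,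
      gen m x = xiMat m * embH m A - embH m A * xiMat m := by
  rcases x with i | j | ⟨⟩
  · by_cases hc : (i.castSucc : Fin (m+1)) = 0
    · have hl : (Fin.last m : Fin (m+1)) ≠ 0 := by
        rw [← hc]; exact ((Fin.castSucc_lt_last i).ne).symm
      refine ⟨Matrix.single 0 0 (-2/3) + Matrix.single (Fin.last m) (Fin.last m) (1/3), ?_⟩
      rw [comm_eq]
      have ht : Matrix.trace (Matrix.single (0 : Fin (m+1)) 0 (-2/3 : ℂ) +
          Matrix.single (Fin.last m) (Fin.last m) (1/3)) = -1/3 := by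
        rw [Matrix.trace_add, Matrix.trace_single_eq_same, Matrix.trace_single_eq_same]; ring
      ext (k | ⟨⟩) (l | ⟨⟩) <;>
          simp [gen, uFun, vFun, ht, stdA, hc, hl, Ne.symm hl] <;>
        split_ifs <;> simp_all <;> ring
    · refine ⟨Matrix.single i.castSucc 0 (-1), ?_⟩
      rw [comm_eq]
      have ht : Matrix.trace (Matrix.single (i.castSucc : Fin (m+1)) 0 (-1 : ℂ)) = 0 :=
        Matrix.trace_single_eq_of_ne _ _ _ hc
      ext (k | ⟨⟩) (l | ⟨⟩) <;>
          simp [gen, uFun, vFun, ht, stdA, hc, (Fin.castSucc_lt_last i).ne] <;>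
        split_ifs <;> simp_all <;> ring
  · by_cases hc : (j.succ : Fin (m+1)) = Fin.last m
    · have hl : (Fin.last m : Fin (m+1)) ≠ 0 := by
        rw [← hc]; exact Fin.succ_ne_zero j
      refine ⟨Matrix.single 0 0 (-1/3) + Matrix.single (Fin.last m) (Fin.last m) (2/3), ?_⟩
      rw [comm_eq]
      have ht : Matrix.trace (Matrix.single (0 : Fin (m+1)) 0 (-1/3 : ℂ) +
          Matrix.single (Fin.last m) (Fin.last m) (2/3)) = 1/3 := by
        rw [Matrix.trace_add, Matrix.trace_single_eq_same, Matrix.trace_single_eq_same]; ring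
      ext (k | ⟨⟩) (l | ⟨⟩) <;>
          simp [gen, uFun, vFun, ht, stdA, hc, hl, Ne.symm hl] <;>
        split_ifs <;> simp_all <;> ring
    · refine ⟨Matrix.single (Fin.last m) j.succ 1, ?_⟩
      rw [comm_eq]
      have ht : Matrix.trace (Matrix.single (Fin.last m : Fin (m+1)) j.succ (1 : ℂ)) = 0 :=
        Matrix.trace_single_eq_of_ne _ _ _ (Ne.symm hc)
      ext (k | ⟨⟩) (l | ⟨⟩) <;>
          simp [gen, uFun, vFun, ht, stdA, hc, Fin.succ_ne_zero j] <;>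
        split_ifs <;> simp_all <;> ring
  · by_cases h0 : (Fin.last m : Fin (m+1)) = 0
    · refine ⟨Matrix.single 0 0 (1/2), ?_⟩
      rw [comm_eq]
      have ht : Matrix.trace (Matrix.single (0 : Fin (m+1)) 0 (1/2 : ℂ)) = 1/2 :=
        Matrix.trace_single_eq_same _ _
      ext (k | ⟨⟩) (l | ⟨⟩) <;>
          simp [gen, uFun, vFun, ht, stdA, h0] <;>
        split_ifs <;> simp_all <;> ring
    · refine ⟨Matrix.single (Fin.last m) 0 1, ?_⟩
      rw [comm_eq]
      have ht : Matrix.trace (Matrix.single (Fin.last m : Fin (m+1)) 0 (1 : ℂ)) = 0 :=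
        Matrix.trace_single_eq_of_ne _ _ _ h0
      ext (k | ⟨⟩) (l | ⟨⟩) <;>
          simp [gen, uFun, vFun, ht, stdA, h0, fun h => h0 (Eq.symm h)] <;>
        split_ifs <;> simp_all <;> ring

/-- `ad ξ : 𝔥 → 𝔪` has rank `2n − 1`, and its image lies in 𝔪
(so it has corank 1 in 𝔪, which has dimension `2n`). Here `n = m + 1 ≥ 1`. -/
theorem adXi_rank (m : ℕ) :
    Module.finrank ℂ
      (Submodule.span ℂ
        {M : Matrix (Fin (m+1) ⊕ Unit) (Fin (m+1) ⊕ Unit) ℂ |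
          ∃ A : Matrix (Fin (m+1)) (Fin (m+1)) ℂ,
            M = xiMat m * embH m A - embH m A * xiMat m}) = 2 * (m+1) - 1 ∧
    ∀ A : Matrix (Fin (m+1)) (Fin (m+1)) ℂ,
      ∃ u v : Fin (m+1) → ℂ,
        xiMat m * embH m A - embH m A * xiMat m =
          Matrix.fromBlocks 0 (Matrix.of fun i (_ : Unit) => u i)
            (Matrix.of fun (_ : Unit) j => v j) 0 := by
  constructor
  · have hspan : Submodule.span ℂ
        {M : Matrix (Fin (m+1) ⊕ Unit) (Fin (m+1) ⊕ Unit) ℂ |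
          ∃ A : Matrix (Fin (m+1)) (Fin (m+1)) ℂ,
            M = xiMat m * embH m A - embH m A * xiMat m} =
        Submodule.span ℂ (Set.range (gen m)) := by
      apply le_antisymm
      · rw [Submodule.span_le]
        rintro M ⟨A, rfl⟩
        rw [comm_eq]
        have huv : vFun m A 0 = -(uFun m A (Fin.last m)) := by
          simp [uFun, vFun, @eq_comm _ (0 : Fin (m+1)) (Fin.last m)]
        rw [mem_span_gen m (uFun m A) (vFun m A) huv]
        refine Submodule.add_mem _ (Submodule.sum_mem _ fun i _ => Submodule.smul_mem _ _
            (Submodule.subset_span ⟨_, rfl⟩))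
          (Submodule.add_mem _ (Submodule.sum_mem _ fun j _ => Submodule.smul_mem _ _
            (Submodule.subset_span ⟨_, rfl⟩))
          (Submodule.smul_mem _ _ (Submodule.subset_span ⟨_, rfl⟩)))
      · rw [Submodule.span_le]
        rintro M ⟨x, rfl⟩
        exact Submodule.subset_span (gen_mem m x)
    rw [hspan, finrank_span_eq_card (gen_indep m)]
    simp [Fintype.card_sum]
    omega
  · intro A
    exact ⟨uFun m A, vFun m A, comm_eq m A⟩
end

section
/- With ξ and 𝔥 as above, a matrix χ = block-diag(A, −tr(A)) lies in the kernel of ad ξ if and only if A satisfies: 2A₁₁ + Σ_{i=2}^n A_{ii} = 0, A_{j1} = 0 for 2 ≤ j ≤ n, A_{nk} = 0 for 1 ≤ k ≤ n−1, and 2A_{nn} + Σ_{i=1}^{n−1} A_{ii} = 0; moreover these constitute exactly 2n − 1 independent linear conditions on A (the condition A_{n1} = 0 appearing twice). -/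
open Matrix

lemma key (m : ℕ) (A : Matrix (Fin (m+1)) (Fin (m+1)) ℂ) :
    xiMat m * embH m A - embH m A * xiMat m = 0 ↔
      (∀ i, A i 0 = if i = 0 then -A.trace else 0) ∧
      (∀ k, A (Fin.last m) k = if k = Fin.last m then -A.trace else 0) := by
  rw [sub_eq_zero, ← Matrix.ext_iff]
  simp only [Sum.forall, mul_apply, Fintype.sum_sum_type, xiMat, embH,
    Matrix.fromBlocks_apply₁₁, Matrix.fromBlocks_apply₁₂, Matrix.fromBlocks_apply₂₁,
    Matrix.fromBlocks_apply₂₂, Matrix.of_apply, Matrix.zero_apply, mul_ite, ite_mul,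
    mul_zero, zero_mul, mul_one, one_mul, Finset.sum_ite_eq, Finset.sum_ite_eq',
    Finset.mem_univ, if_true, Finset.sum_const_zero, zero_add, add_zero,
    Finset.univ_unique, Finset.sum_singleton]
  constructor
  · rintro ⟨h1, h2⟩
    exact ⟨fun i => ((h1 i).2 ()).symm, fun k => (h2 ()).1 k⟩
  · rintro ⟨h1, h2⟩
    exact ⟨fun a => ⟨fun b => (ite_self 0).symm, fun _ => (h1 a).symm⟩,
      fun _ => ⟨h2, fun _ => trivial⟩⟩

lemma embH_add (m : ℕ) (A B : Matrix (Fin (m+1)) (Fin (m+1)) ℂ) :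
    embH m (A + B) = embH m A + embH m B := by
  ext (i | i) (j | j) <;> simp [embH, Matrix.trace_add, neg_add] <;> ring

lemma embH_smul (m : ℕ) (c : ℂ) (A : Matrix (Fin (m+1)) (Fin (m+1)) ℂ) :
    embH m (c • A) = c • embH m A := by
  ext (i | i) (j | j) <;> simp [embH, Matrix.trace_smul, mul_comm]

noncomputable def adXi (m : ℕ) :
    Matrix (Fin (m+1)) (Fin (m+1)) ℂ →ₗ[ℂ]
      Matrix (Fin (m+1) ⊕ Unit) (Fin (m+1) ⊕ Unit) ℂ where
  toFun A := xiMat m * embH m A - embH m A * xiMat m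
  map_add' A B := by rw [embH_add]; noncomm_ring
  map_smul' c A := by
    rw [embH_smul]
    simp [Matrix.mul_smul, Matrix.smul_mul, smul_sub]

noncomputable def projM (m : ℕ) :
    Matrix (Fin (m+1)) (Fin (m+1)) ℂ →ₗ[ℂ] Matrix (Fin m) (Fin m) ℂ where
  toFun A := Matrix.of fun i j => A i.castSucc j.succ
  map_add' _ _ := rfl
  map_smul' _ _ := rfl

noncomputable def phi (m : ℕ) :
    LinearMap.ker (adXi m) →ₗ[ℂ] Matrix (Fin m) (Fin m) ℂ :=
  (projM m).comp (LinearMap.ker (adXi m)).subtype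

lemma phi_inj (m : ℕ) : Function.Injective (phi m) := by
  rw [← LinearMap.ker_eq_bot, LinearMap.ker_eq_bot']
  rintro ⟨A, hA⟩ hz
  have hA' : xiMat m * embH m A - embH m A * xiMat m = 0 := hA
  obtain ⟨h1, h2⟩ := (key m A).mp hA'
  have h0 : ∀ (i : Fin m) (j : Fin m), A i.castSucc j.succ = 0 := fun i j =>
    congrFun (congrFun hz i) j
  have hfree : ∀ p q : Fin (m+1), p ≠ Fin.last m → q ≠ 0 → A p q = 0 := by
    intro p q hp hq
    have := h0 (p.castPred hp) (q.pred hq)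
    rwa [Fin.castSucc_castPred, Fin.succ_pred] at this
  set t := A.trace with ht
  have hsum2 : ∀ i ∈ ({0, Fin.last m} : Finset (Fin (m+1))), A i i = -t := by
    intro i hi
    rcases Finset.mem_insert.mp hi with h | h
    · subst h; simpa using h1 0
    · rw [Finset.mem_singleton] at h; subst h; simpa using h2 (Fin.last m)
  have htsum : t = ∑ i ∈ ({0, Fin.last m} : Finset (Fin (m+1))), A i i := by
    rw [ht]
    simp only [Matrix.trace, Matrix.diag_apply]
    exact (Finset.sum_subset (Finset.subset_univ _) (fun x _ hx => by
      simp only [Finset.mem_insert, Finset.mem_singleton, not_or] at hx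
      exact hfree x x hx.2 hx.1)).symm
  have hcard := (({0, Fin.last m} : Finset (Fin (m+1))).card)
  have hc : t = ((({0, Fin.last m} : Finset (Fin (m+1))).card : ℕ) : ℂ) * (-t) :=
    calc t = ∑ i ∈ ({0, Fin.last m} : Finset (Fin (m+1))), A i i := htsum
    _ = ∑ _i ∈ ({0, Fin.last m} : Finset (Fin (m+1))), (-t) := Finset.sum_congr rfl hsum2
    _ = (({0, Fin.last m} : Finset (Fin (m+1))).card) • (-t) := Finset.sum_const _
    _ = _ := nsmul_eq_mul _ _
  have ht0 : t = 0 := by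
    have h3 : ((({0, Fin.last m} : Finset (Fin (m+1))).card + 1 : ℕ) : ℂ) * t = 0 := by
      push_cast
      linear_combination hc
    rcases mul_eq_zero.mp h3 with h | h
    · exfalso
      rw [Nat.cast_eq_zero] at h
      omega
    · exact h
  have hAz : A = 0 := by
    ext p q
    by_cases hq : q = 0
    · subst hq
      rw [h1 p, ht0]
      simp
    · by_cases hp : p = Fin.last m
      · subst hp
        rw [h2 q, ht0]
        simp
      · simpa using hfree p q hp hq
  exact Subtype.ext hAz

lemma phi_surj (m : ℕ) : Function.Surjective (phi m) := by
  rw [← LinearMap.range_eq_top, eq_top_iff]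
  rintro B -
  have hstd : ∀ (i j : Fin m), Matrix.single i j (1:ℂ) ∈ LinearMap.range (phi m) := by
    intro i j
    have hm : (0 : Fin (m+1)) ≠ Fin.last m := by
      have hpos := i.pos
      intro h
      rw [Fin.ext_iff] at h
      simp [Fin.last] at h
      omega
    set c : ℂ := if (i.castSucc : Fin (m+1)) = j.succ then (-3⁻¹ : ℂ) else 0 with hcdef
    set P : Matrix (Fin (m+1)) (Fin (m+1)) ℂ :=
      Matrix.single i.castSucc j.succ (1:ℂ)
        + c • (Matrix.single (0 : Fin (m+1)) 0 1
            + Matrix.single (Fin.last m) (Fin.last m) 1) with hPdef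
    have htrP : -P.trace = c := by
      by_cases hd : (i.castSucc : Fin (m+1)) = j.succ
      · rw [hcdef, if_pos hd, hPdef, hd]
        simp only [Matrix.trace_add, Matrix.trace_smul, Matrix.trace_single_eq_same,
          smul_eq_mul, hcdef, if_pos hd]
        norm_num
      · rw [hcdef, if_neg hd, hPdef]
        simp only [Matrix.trace_add, Matrix.trace_smul, Matrix.trace_single_eq_same,
          Matrix.trace_single_eq_of_ne _ _ _ hd, smul_eq_mul, hcdef, if_neg hd]
        ring
    have hPmem : P ∈ LinearMap.ker (adXi m) := by
      have hcomm : xiMat m * embH m P - embH m P * xiMat m = 0 := by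
        rw [key]
        constructor
        · intro p
          rw [htrP, hPdef]
          by_cases hp : p = 0
          · subst hp
            simp [Matrix.single, Fin.succ_ne_zero, Ne.symm hm]
          · simp [Matrix.single, Fin.succ_ne_zero, Ne.symm hm, hp, Ne.symm hp]
        · intro k
          rw [htrP, hPdef]
          by_cases hk : k = Fin.last m
          · subst hk
            simp [Matrix.single, (Fin.castSucc_lt_last i).ne, hm]
          · simp [Matrix.single, (Fin.castSucc_lt_last i).ne, hm, hk, Ne.symm hk]
      exact hcomm
    refine ⟨⟨P, hPmem⟩, ?_⟩
    ext i' j'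
    show P i'.castSucc j'.succ = _
    rw [hPdef]
    simp [Matrix.single, Ne.symm (Fin.succ_ne_zero j'),
      Ne.symm (Fin.castSucc_lt_last i').ne, (Fin.castSucc_lt_last i').ne,
      Fin.succ_ne_zero, Fin.castSucc_inj, Fin.succ_inj]
  have hB : B = ∑ i : Fin m, ∑ j : Fin m, B i j • Matrix.single i j (1:ℂ) := by
    simpa using Matrix.matrix_eq_sum_single B
  rw [hB]
  exact Submodule.sum_mem _ fun i _ => Submodule.sum_mem _ fun j _ =>
    Submodule.smul_mem _ _ (hstd i j)

/-- `χ = block-diag(A, −tr A)` lies in `ker (ad ξ)` iff `A` satisfies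
`2A₁₁ + Σ_{i=2}ⁿ A_{ii} = 0`, `A_{j1} = 0` for `2 ≤ j ≤ n`, `A_{nk} = 0` for
`1 ≤ k ≤ n−1` and `2A_{nn} + Σ_{i=1}^{n−1} A_{ii} = 0`; moreover these are exactly
`2n − 1` independent conditions, i.e. the kernel has dimension `n² − (2n−1)`.
Here `n = m + 1 ≥ 1` and indices are 0-based (`A₁₁ = A 0 0`, `A_{nn} = A (last) (last)`). -/
theorem adXi_ker (m : ℕ) :
    (∀ A : Matrix (Fin (m+1)) (Fin (m+1)) ℂ,
      xiMat m * embH m A - embH m A * xiMat m = 0 ↔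
        (2 * A 0 0 + ∑ i ∈ Finset.univ.erase (0 : Fin (m+1)), A i i = 0 ∧
         (∀ j : Fin (m+1), j ≠ 0 → A j 0 = 0) ∧
         (∀ k : Fin (m+1), k ≠ Fin.last m → A (Fin.last m) k = 0) ∧
         2 * A (Fin.last m) (Fin.last m)
           + ∑ i ∈ Finset.univ.erase (Fin.last m), A i i = 0)) ∧
    Module.finrank ℂ
      (Submodule.span ℂ
        {A : Matrix (Fin (m+1)) (Fin (m+1)) ℂ |
          xiMat m * embH m A - embH m A * xiMat m = 0})
      = (m+1)^2 - (2 * (m+1) - 1) := by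
  constructor
  · intro A
    rw [key m A]
    have htr0 : A.trace = A 0 0 + ∑ i ∈ Finset.univ.erase (0 : Fin (m+1)), A i i := by
      simp only [Matrix.trace, Matrix.diag_apply]
      exact (Finset.add_sum_erase _ _ (Finset.mem_univ 0)).symm
    have htrl : A.trace = A (Fin.last m) (Fin.last m)
        + ∑ i ∈ Finset.univ.erase (Fin.last m), A i i := by
      simp only [Matrix.trace, Matrix.diag_apply]
      exact (Finset.add_sum_erase _ _ (Finset.mem_univ _)).symm
    constructor
    · rintro ⟨h1, h2⟩
      refine ⟨?_, ?_, ?_, ?_⟩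
      · have := h1 0; rw [if_pos rfl] at this; linear_combination this - htr0
      · intro j hj; have := h1 j; rwa [if_neg hj] at this
      · intro k hk; have := h2 k; rwa [if_neg hk] at this
      · have := h2 (Fin.last m); rw [if_pos rfl] at this; linear_combination this - htrl
    · rintro ⟨c1, c2, c3, c4⟩
      constructor
      · intro i
        by_cases hi : i = 0
        · subst hi; rw [if_pos rfl]; linear_combination c1 + htr0
        · rw [if_neg hi]; exact c2 i hi
      · intro k
        by_cases hk : k = Fin.last m
        · subst hk; rw [if_pos rfl]; linear_combination c4 + htrl
        · rw [if_neg hk]; exact c3 k hk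
  · have hset : {A : Matrix (Fin (m+1)) (Fin (m+1)) ℂ |
        xiMat m * embH m A - embH m A * xiMat m = 0}
        = (LinearMap.ker (adXi m) : Set (Matrix (Fin (m+1)) (Fin (m+1)) ℂ)) := by
      ext A
      simp only [Set.mem_setOf_eq, SetLike.mem_coe, LinearMap.mem_ker]
      rfl
    rw [hset, Submodule.span_eq]
    have e : LinearMap.ker (adXi m) ≃ₗ[ℂ] Matrix (Fin m) (Fin m) ℂ :=
      LinearEquiv.ofBijective (phi m) ⟨phi_inj m, phi_surj m⟩
    rw [e.finrank_eq]
    have hfr : Module.finrank ℂ (Matrix (Fin m) (Fin m) ℂ) = m * m := by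
      simp [Module.finrank_matrix]
    rw [hfr]
    have h1 : (m+1)^2 = m * m + (2 * (m+1) - 1) := by ring_nf; omega
    omega
end
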